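/- Let M = (E, I) be a matroid of rank r on a finite ground set E equipped with a strict linear order ≻ on E. Let A be a base of M such that for every x ∈ E \ A, x is the worst element of its fundamental circuit C_A(x), i.e. y ≻ x or y = x for every y ∈ C_A(x) (this characterizes A as the optimal base of the ordered matroid). Let B be a base of M disjoint from A. Then there exists a bijection π : A → B such that for every a ∈ A, a ≻ π(a) and (B \ {π(a)}) ∪ {a} is independent in M. -/

import Mathlib

/-- A circuit of a matroid: an inclusion-wise minimal dependent set. -/
def Matroid.IsCircuit' {α : Type*} (M : Matroid α) (C : Set α) : Prop :=
  M.Dep C ∧ ∀ D ⊂ C, ¬ M.Dep D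

/-!
Apply Hall's theorem to the relation `a ~ b` iff `b < a` and `B - b + a` is independent.
For `S ⊆ A` with neighbourhood `T`, all of `A` lies in the closure of `T ∪ (A \ S)`, by
descending induction on `a ∈ S`: `a` is spanned by its fundamental circuit in `B`, whose
elements below `a` lie in `T`, while by optimality of `A` each element `b > a` is spanned by
elements of `A` above `b`, hence above `a`. Comparing ranks gives `|S| ≤ |T|`, and an
injection between bases is a bijection.
-/

open Set Function

theorem Set.exists_injective_of_forall_encard_le {α β : Type*} {A : Set α} {B : Set β}
    (hB : B.Finite) (r : α → β → Prop)
    (hall : ∀ S ⊆ A, S.Finite → S.encard ≤ {b ∈ B | ∃ a ∈ S, r a b}.encard) :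
    ∃ f : A → B, Injective f ∧ ∀ a : A, r a (f a) := by
  classical
  have := hB.fintype
  refine (Fintype.all_card_le_filter_rel_iff_exists_injective (fun (a : A) (b : B) ↦ r a b)).1
    fun s ↦ ?_
  have hS := hall (Subtype.val '' (s : Set A)) (by simp) (s.finite_toSet.image _)
  have hN : {b ∈ B | ∃ a ∈ Subtype.val '' (s : Set A), r a b} =
      Subtype.val '' ((({b | ∃ a ∈ s, r a b} : Finset B)) : Set B) := by
    ext b; simp [and_comm]
  rwa [hN, Subtype.val_injective.encard_image, Subtype.val_injective.encard_image,
    encard_coe_eq_coe_finsetCard, encard_coe_eq_coe_finsetCard, Nat.cast_le] at hS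

namespace Matroid

variable {α : Type*} {M : Matroid α} {A B C I X : Set α} {e : α}

lemma IsCircuit.isCircuit' (hC : M.IsCircuit C) : M.IsCircuit' C :=
  ⟨hC.dep, fun _ hD hDdep ↦ hDdep.not_indep (hC.ssubset_indep hD)⟩

lemma Indep.encard_le_encard_of_subset_closure (hI : M.Indep I) (hIX : I ⊆ M.closure X) :
    I.encard ≤ X.encard :=
  calc I.encard ≤ M.eRk (M.closure X) := hI.encard_le_eRk_of_subset hIX
    _ = M.eRk X := M.eRk_closure_eq X
    _ ≤ X.encard := M.eRk_le_encard X

lemma Indep.encard_le_of_subset_closure_union_sdiff {S T : Set α} (hA : M.Indep A)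
    (hAfin : A.Finite) (hSA : S ⊆ A) (hAcl : A ⊆ M.closure (T ∪ (A \ S))) :
    S.encard ≤ T.encard := by
  have hfin : (A \ S).encard ≠ ⊤ := hAfin.sdiff.encard_lt_top.ne
  have := (hA.encard_le_encard_of_subset_closure hAcl).trans (encard_union_le T (A \ S))
  rw [← encard_sdiff_add_encard_of_subset hSA, add_comm T.encard] at this
  exact (ENat.add_le_add_iff_left hfin).1 this

lemma Indep.mem_closure_setOf_insert_sdiff_indep (hI : M.Indep I) (hecl : e ∈ M.closure I)
    (heI : e ∉ I) : e ∈ M.closure {x ∈ I | M.Indep (insert e (I \ {x}))} := by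
  have hC := hI.fundCircuit_isCircuit hecl heI
  refine M.closure_subset_closure ?_
    (hC.mem_closure_sdiff_singleton_of_mem (M.mem_fundCircuit e I))
  refine fun x hx ↦ ⟨?_, ?_⟩
  · exact ((M.fundCircuit_subset_insert e I) hx.1).resolve_left hx.2
  · rw [insert_sdiff_singleton_comm (Ne.symm hx.2)]
    exact (hI.mem_fundCircuit_iff hecl heI).1 hx.1

variable [LinearOrder α]

lemma Indep.mem_closure_setOf_lt_of_forall_fundCircuit_le (hI : M.Indep I)
    (hecl : e ∈ M.closure I) (heI : e ∉ I) (hle : ∀ y ∈ M.fundCircuit e I, e ≤ y) :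
    e ∈ M.closure {y ∈ I | e < y} := by
  have hC := hI.fundCircuit_isCircuit hecl heI
  refine M.closure_subset_closure ?_
    (hC.mem_closure_sdiff_singleton_of_mem (M.mem_fundCircuit e I))
  refine fun y hy ↦ ⟨?_, ?_⟩
  · exact ((M.fundCircuit_subset_insert e I) hy.1).resolve_left hy.2
  · exact (hle y hy.1).lt_of_ne (Ne.symm hy.2)

def IsDescendingExchange (M : Matroid α) (B : Set α) (a b : α) : Prop :=
  b < a ∧ M.Indep (insert a (B \ {b}))

lemma subset_closure_descendingExchanges_union_sdiff (S : Set α) (hAfin : A.Finite)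
    (hB : M.Indep B) (hAB : Disjoint A B) (hAcl : A ⊆ M.closure B)
    (hopt : ∀ b ∈ B, b ∈ M.closure {y ∈ A | b < y}) :
    A ⊆ M.closure ({b ∈ B | ∃ a ∈ S, M.IsDescendingExchange B a b} ∪ (A \ S)) := by
  intro a ha
  refine hAfin.wellFoundedOn.induction (r := (· > ·)) ha fun a ha IH ↦ ?_
  obtain haS | haS := em' (a ∈ S)
  · exact M.mem_closure_of_mem' (Or.inr ⟨ha, haS⟩) (M.mem_ground_of_mem_closure (hAcl ha))
  have haB : a ∉ B := hAB.notMem_of_mem_left ha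
  refine M.closure_subset_closure_of_subset_closure (fun b hb ↦ ?_)
    (hB.mem_closure_setOf_insert_sdiff_indep (hAcl ha) haB)
  obtain ⟨hbB, hind⟩ := hb
  rcases lt_or_gt_of_ne (show b ≠ a by rintro rfl; exact haB hbB) with hba | hab
  · exact M.mem_closure_of_mem' (Or.inl ⟨hbB, a, haS, hba, hind⟩) (hB.subset_ground hbB)
  · exact M.closure_subset_closure_of_subset_closure
      (fun y hy ↦ IH y hy.1 (hab.trans hy.2)) (hopt b hbB)

end Matroid

open Matroid in
/-- Let `M` be a matroid on a finite, linearly ordered ground set, let `A`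
be a base such that every `x ∈ E \ A` is the worst element of its fundamental circuit
`C_A(x)` (i.e. `A` is the optimal base), and let `B` be a base disjoint from `A`. Then
there is a bijection `π : A → B` with `a ≻ π a` and `B - π a + a` independent for all
`a ∈ A`. -/
theorem optimal_base_exchange_matching {α : Type*} [LinearOrder α] (M : Matroid α)
    (hfin : M.E.Finite) (A B : Set α) (hA : M.IsBase A) (hB : M.IsBase B)
    (hAB : Disjoint A B)
    (hopt : ∀ x ∈ M.E \ A, ∀ Cx : Set α, M.IsCircuit' Cx → Cx ⊆ insert x A →
      ∀ y ∈ Cx, x ≤ y) :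
    ∃ π : A → B, Function.Bijective π ∧
      ∀ a : A, (π a : α) < (a : α) ∧ M.Indep (insert (a : α) (B \ {(π a : α)})) := by
  have hAfin : A.Finite := hfin.subset hA.subset_ground
  have hBfin : B.Finite := hfin.subset hB.subset_ground
  have hBA : ∀ b ∈ B, b ∈ M.closure {y ∈ A | b < y} := fun b hb ↦ by
    have hbA : b ∉ A := hAB.notMem_of_mem_right hb
    have hbE : b ∈ M.E := hB.subset_ground hb
    exact hA.indep.mem_closure_setOf_lt_of_forall_fundCircuit_le (by rwa [hA.closure_eq]) hbA
      (hopt b ⟨hbE, hbA⟩ _ (hA.fundCircuit_isCircuit hbE hbA).isCircuit'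
        (M.fundCircuit_subset_insert b A))
  have hAcl : A ⊆ M.closure B := hB.closure_eq ▸ hA.subset_ground
  obtain ⟨π, hπinj, hπ⟩ := exists_injective_of_forall_encard_le hBfin (M.IsDescendingExchange B)
    fun S hSA _ ↦ hA.indep.encard_le_of_subset_closure_union_sdiff hAfin hSA
      (subset_closure_descendingExchanges_union_sdiff S hAfin hB.indep hAB hAcl hBA)
  have := hBfin.to_subtype
  refine ⟨π, (Nat.bijective_iff_injective_and_card π).2 ⟨hπinj, ?_⟩, hπ⟩
  rw [Nat.card_coe_set_eq, Nat.card_coe_set_eq, hA.ncard_eq_ncard_of_isBase hB]
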